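/- Let N ≥ 1, let S > 0 and σ > 0, and let V ∈ ℝ^N. Let τx_0,…,τx_{N−1}, τy_0,…,τy_{N−1} be 2N independent real random variables, each with law gaussianReal 0 (S²σ²/2), and set τ_k = τx_k + i·τy_k ∈ ℂ. Then for every index j ∈ {0,…,N−1}, the random variable Re((F⁻¹(F(V) + τ))_j) is integrable with respect to the underlying product measure and its expectation equals V_j. -/

import Mathlib

/-!
Since `F⁻¹ ∘ F = id` (orthogonality of the `N`-th roots of unity) and `F⁻¹` is linear, the
quantity `Re (F⁻¹ (F V + τ))_j` equals `V_j + L τ` for a real-linear functional `L` of the noise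
`τ ∈ (ℝ × ℝ)^N`. The noise law is a product of centred Gaussians, so `τ` is integrable with
mean zero, and therefore `L τ` is integrable with mean `L 0 = 0`.
-/

open MeasureTheory ProbabilityTheory

/-- The unitary discrete Fourier transform on `ℂ^N`. -/
noncomputable def dft {N : ℕ} (z : Fin N → ℂ) : Fin N → ℂ := fun i =>
  (1 / (Real.sqrt N : ℂ)) *
    ∑ n : Fin N, z n * Complex.exp (-(2 * (Real.pi : ℂ) * Complex.I * (i : ℕ) * (n : ℕ)) / N)

/-- The inverse unitary discrete Fourier transform on `ℂ^N`. -/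
noncomputable def idft {N : ℕ} (z : Fin N → ℂ) : Fin N → ℂ := fun n =>
  (1 / (Real.sqrt N : ℂ)) *
    ∑ i : Fin N, z i * Complex.exp ((2 * (Real.pi : ℂ) * Complex.I * (i : ℕ) * (n : ℕ)) / N)

open Complex Real

lemma IsPrimitiveRoot.sum_pow_div_pow {K : Type*} [Field K] {ζ : K} {N : ℕ}
    (hζ : IsPrimitiveRoot ζ N) (j n : Fin N) :
    ∑ i : Fin N, (ζ ^ (j : ℕ) / ζ ^ (n : ℕ)) ^ (i : ℕ) = if n = j then (N : K) else 0 := by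
  have hζ0 : ζ ≠ 0 := hζ.ne_zero (Fin.pos j).ne'
  rw [Fin.sum_univ_eq_sum_range (fun i => (ζ ^ (j : ℕ) / ζ ^ (n : ℕ)) ^ i)]
  split_ifs with h
  · subst h
    simp [hζ0]
  · have hw : ζ ^ (j : ℕ) / ζ ^ (n : ℕ) ≠ 1 := fun hw =>
      h (Fin.ext (hζ.pow_inj n.isLt j.isLt ((div_eq_one_iff_eq (pow_ne_zero _ hζ0)).mp hw).symm))
    rw [geom_sum_eq hw, div_pow, ← pow_mul, ← pow_mul, mul_comm (j : ℕ), mul_comm (n : ℕ),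
      pow_mul, pow_mul, hζ.pow_eq_one, one_pow, one_pow, div_one, sub_self, zero_div]

lemma exp_two_pi_I_mul_mul_div (N i n : ℕ) :
    exp (2 * π * I * i * n / N) = exp (2 * π * I / N) ^ (i * n) := by
  rw [← Complex.exp_nat_mul]
  push_cast
  ring_nf

theorem idft_dft {N : ℕ} (z : Fin N → ℂ) : idft (dft z) = z := by
  funext j
  have hN : (N : ℂ) ≠ 0 := Nat.cast_ne_zero.mpr (Fin.pos j).ne'
  set ζ := exp (2 * π * I / N)
  have hζ : IsPrimitiveRoot ζ N := isPrimitiveRoot_exp N (Fin.pos j).ne'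
  have hsqrt : (Real.sqrt N : ℂ) * Real.sqrt N = N := by
    rw [← ofReal_mul, Real.mul_self_sqrt N.cast_nonneg, ofReal_natCast]
  calc idft (dft z) j
      = 1 / (Real.sqrt N * Real.sqrt N : ℂ) *
          ∑ n, z n * ∑ i : Fin N, (ζ ^ (j : ℕ) / ζ ^ (n : ℕ)) ^ (i : ℕ) := by
        simp only [idft, dft, neg_div, Complex.exp_neg, exp_two_pi_I_mul_mul_div, Finset.sum_mul,
          Finset.mul_sum, div_pow, ← pow_mul]
        rw [Finset.sum_comm]
        refine Finset.sum_congr rfl fun n _ => Finset.sum_congr rfl fun i _ => ?_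
        ring
    _ = z j := by
        simp only [hsqrt, hζ.sum_pow_div_pow, mul_ite, mul_zero, Finset.sum_ite_eq', Finset.mem_univ,
          if_true]
        field_simp

lemma idft_add {N : ℕ} (z w : Fin N → ℂ) : idft (z + w) = idft z + idft w := by
  funext n
  simp only [idft, Pi.add_apply, add_mul, Finset.sum_add_distrib, mul_add]

lemma idft_smul {N : ℕ} (c : ℂ) (z : Fin N → ℂ) : idft (c • z) = c • idft z := by
  funext n
  simp only [idft, Pi.smul_apply, smul_eq_mul, Finset.mul_sum]
  exact Finset.sum_congr rfl fun i _ => by ring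

noncomputable def idftCLM (N : ℕ) : (Fin N → ℂ) →L[ℂ] (Fin N → ℂ) :=
  LinearMap.toContinuousLinearMap ⟨⟨idft, idft_add⟩, idft_smul⟩

@[simp]
lemma idftCLM_apply {N : ℕ} (z : Fin N → ℂ) : idftCLM N z = idft z := rfl

noncomputable def complexOfPairsCLM (ι : Type*) : (ι → ℝ × ℝ) →L[ℝ] (ι → ℂ) :=
  ContinuousLinearMap.pi fun k => equivRealProdCLM.symm.toContinuousLinearMap.comp
    (ContinuousLinearMap.proj k)

lemma complexOfPairsCLM_apply {ι : Type*} (τ : ι → ℝ × ℝ) (k : ι) :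
    complexOfPairsCLM ι τ k = (τ k).1 + I * (τ k).2 := by
  simp [complexOfPairsCLM, equivRealProdCLM_symm_apply, mul_comm]

section

variable {ι : Type*} [Fintype ι] {X : ι → Type*} [∀ i, NormedAddCommGroup (X i)]
  [∀ i, MeasurableSpace (X i)] {μ : (i : ι) → Measure (X i)} [∀ i, IsProbabilityMeasure (μ i)]

lemma integrable_id_pi (h : ∀ i, Integrable id (μ i)) : Integrable id (Measure.pi μ) :=
  Integrable.of_eval fun i => integrable_eval (h i)

lemma integral_id_pi [∀ i, NormedSpace ℝ (X i)] [∀ i, CompleteSpace (X i)]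
    [∀ i, OpensMeasurableSpace (X i)] [∀ i, SecondCountableTopology (X i)]
    (h : ∀ i, Integrable id (μ i)) :
    ∫ x, x ∂Measure.pi μ = fun i => ∫ x, x ∂μ i := by
  funext i
  rw [eval_integral fun i => integrable_eval (h i), integral_eval]

end

section

variable {E F : Type*} [NormedAddCommGroup E] [NormedSpace ℝ E] [CompleteSpace E]
  [NormedAddCommGroup F] [NormedSpace ℝ F] [CompleteSpace F]
  [MeasurableSpace E] [MeasurableSpace F] {μ : Measure E} {ν : Measure F}
  [IsProbabilityMeasure μ] [IsProbabilityMeasure ν]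

lemma integral_id_prod (hμ : Integrable id μ) (hν : Integrable id ν) :
    ∫ p, p ∂(μ.prod ν) = (∫ x, x ∂μ, ∫ y, y ∂ν) := by
  have h : Integrable (fun p : E × F => p) (μ.prod ν) :=
    (hμ.comp_fst ν).prodMk (hν.comp_snd μ)
  refine Prod.ext ((fst_integral h).trans ?_) ((snd_integral h).trans ?_)
  · simpa using integral_fun_fst (μ := μ) (ν := ν) (fun x : E => x)
  · simpa using integral_fun_snd (μ := μ) (ν := ν) (fun y : F => y)

end

lemma integrable_and_integral_const_add_clm {E : Type*} [NormedAddCommGroup E] [NormedSpace ℝ E]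
    [CompleteSpace E] [MeasurableSpace E] {P : Measure E} [IsProbabilityMeasure P]
    (hint : Integrable id P) (hmean : ∫ x, x ∂P = 0) (c : ℝ) (L : E →L[ℝ] ℝ) :
    Integrable (fun x => c + L x) P ∧ ∫ x, c + L x ∂P = c := by
  have hL : Integrable (fun x => L x) P := L.integrable_comp hint
  refine ⟨(integrable_const c).add hL, ?_⟩
  rw [integral_add (integrable_const c) hL, L.integral_comp_id_comm hint, hmean]
  simp

theorem gredp_unbiased_general (N : ℕ) (S σ : ℝ)
    (V : Fin N → ℝ) (j : Fin N) :
    Integrable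
      (fun τ : Fin N → ℝ × ℝ =>
        (idft (fun k => dft (fun n => (V n : ℂ)) k
          + (((τ k).1 : ℂ) + Complex.I * ((τ k).2 : ℂ))) j).re)
      (Measure.pi (fun _ : Fin N =>
        (gaussianReal 0 ((S ^ 2 * σ ^ 2 / 2).toNNReal)).prod
          (gaussianReal 0 ((S ^ 2 * σ ^ 2 / 2).toNNReal)))) ∧
    ∫ τ : Fin N → ℝ × ℝ,
        (idft (fun k => dft (fun n => (V n : ℂ)) k
          + (((τ k).1 : ℂ) + Complex.I * ((τ k).2 : ℂ))) j).re
      ∂(Measure.pi (fun _ : Fin N =>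
        (gaussianReal 0 ((S ^ 2 * σ ^ 2 / 2).toNNReal)).prod
          (gaussianReal 0 ((S ^ 2 * σ ^ 2 / 2).toNNReal))))
      = V j := by
  set γ := gaussianReal 0 (S ^ 2 * σ ^ 2 / 2).toNNReal
  let L : (Fin N → ℝ × ℝ) →L[ℝ] ℝ :=
    reCLM ∘L .proj j ∘L (idftCLM N).restrictScalars ℝ ∘L complexOfPairsCLM (Fin N)
  have hsplit (τ : Fin N → ℝ × ℝ) : (idft (fun k => dft (fun n => (V n : ℂ)) k
      + (((τ k).1 : ℂ) + I * ((τ k).2 : ℂ))) j).re = V j + L τ := by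
    have hnoise : (fun k => dft (fun n => (V n : ℂ)) k + (((τ k).1 : ℂ) + I * ((τ k).2 : ℂ))) =
        dft (fun n => (V n : ℂ)) + complexOfPairsCLM (Fin N) τ :=
      funext fun k => by simp [complexOfPairsCLM_apply]
    rw [hnoise, idft_add, idft_dft]
    simp [L]
  have hγ : Integrable id (γ.prod γ) := IsGaussian.integrable_id
  have hcentered : ∫ p, p ∂(γ.prod γ) = 0 := by
    simp [integral_id_prod IsGaussian.integrable_id IsGaussian.integrable_id, γ,
      integral_id_gaussianReal]
  simp_rw [hsplit]
  exact integrable_and_integral_const_add_clm (integrable_id_pi fun _ => hγ)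
    (by rw [integral_id_pi fun _ => hγ, hcentered]; rfl) _ L

/-- Unbiasedness of the GReDP mechanism: the real part of the `j`-th coordinate of
`F⁻¹(F(V) + τ)`, with circularly symmetric complex Gaussian noise `τ` of per-component
variance `S²σ²/2`, is integrable and has expectation `V_j`. -/
theorem gredp_unbiased (N : ℕ) (hN : 1 ≤ N) (S σ : ℝ) (hS : 0 < S) (hσ : 0 < σ)
    (V : Fin N → ℝ) (j : Fin N) :
    Integrable
      (fun τ : Fin N → ℝ × ℝ =>
        (idft (fun k => dft (fun n => (V n : ℂ)) k
          + (((τ k).1 : ℂ) + Complex.I * ((τ k).2 : ℂ))) j).re)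
      (Measure.pi (fun _ : Fin N =>
        (gaussianReal 0 ((S ^ 2 * σ ^ 2 / 2).toNNReal)).prod
          (gaussianReal 0 ((S ^ 2 * σ ^ 2 / 2).toNNReal)))) ∧
    ∫ τ : Fin N → ℝ × ℝ,
        (idft (fun k => dft (fun n => (V n : ℂ)) k
          + (((τ k).1 : ℂ) + Complex.I * ((τ k).2 : ℂ))) j).re
      ∂(Measure.pi (fun _ : Fin N =>
        (gaussianReal 0 ((S ^ 2 * σ ^ 2 / 2).toNNReal)).prod
          (gaussianReal 0 ((S ^ 2 * σ ^ 2 / 2).toNNReal))))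
      = V j :=
  gredp_unbiased_general N S σ V j
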